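/- Let γ > 0, s ≥ 0, and let F be the function λ ↦ (1 - e^{-(tλ)^m})^M on [1/4, 1], where t > 0, m ≥ 1, M ∈ ℕ. Then ‖F‖_{C^γ([1/4,1])} ≤ C·min{1, t^{mM}} for a constant C depending only on γ, m, M (where γ is an integer and the C^γ norm is the maximum of the sup-norms of derivatives up to order γ). -/

import Mathlib

/-!
With `τ = t ^ m`, the function is `g ∘ (· ^ m)` on `x > 0`, where `g u = (1 - exp (-τ * u)) ^ M`
and `x ^ m` ranges over `[4 ^ (-m), 1]`; the Faà di Bruno bound `n! * C * D ^ n` reduces everything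
to bounds on `g`, itself the composition of `z ↦ z ^ M` with `u ↦ 1 - exp (-τ * u)`.
For `τ ≤ 1` the inner value is at most `τ` and its derivatives at most `τ ^ i`, so the factor
`z ^ (M - p)` of the `p`-th derivative of `z ^ M` and `τ ^ p` from the chain rule give `τ ^ M`.
For any `τ`, the derivatives `τ ^ i * exp (-τ * u)` of the inner function are bounded independently
of `τ` on `u ≥ a > 0`, since `y ^ i ≤ i! * exp y`.
-/

open Real Set Nat

theorem Nat.descFactorial_le_factorial (n k : ℕ) : n.descFactorial k ≤ n ! := by
  rcases le_or_gt k n with hkn | hnk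
  · rw [← factorial_mul_descFactorial hkn]
    exact Nat.le_mul_of_pos_left _ (factorial_pos _)
  · simp [descFactorial_eq_zero_iff_lt.mpr hnk]

theorem norm_iteratedDeriv_comp_le_of_isOpen {𝕜 F : Type*} [NontriviallyNormedField 𝕜]
    [NormedAddCommGroup F] [NormedSpace 𝕜 F] {g : 𝕜 → F} {f : 𝕜 → 𝕜} {s : Set 𝕜}
    (hs : IsOpen s) {x : 𝕜} (hx : x ∈ s) {n : ℕ} (hg : ContDiff 𝕜 n g) (hf : ContDiffOn 𝕜 n f s)
    {C D : ℝ} (hC : ∀ i ≤ n, ‖iteratedDeriv i g (f x)‖ ≤ C)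
    (hD : ∀ i, 1 ≤ i → i ≤ n → ‖iteratedDeriv i f x‖ ≤ D ^ i) :
    ‖iteratedDeriv n (g ∘ f) x‖ ≤ n ! * C * D ^ n := by
  rw [← norm_iteratedFDeriv_eq_norm_iteratedDeriv, ← iteratedFDerivWithin_of_isOpen n hs hx]
  refine norm_iteratedFDerivWithin_comp_le hg.contDiffOn hf le_rfl uniqueDiffOn_univ
    hs.uniqueDiffOn (mapsTo_univ _ _) hx (fun i hi ↦ ?_) (fun i hi hin ↦ ?_)
  · rw [iteratedFDerivWithin_univ, norm_iteratedFDeriv_eq_norm_iteratedDeriv]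
    exact hC i hi
  · rw [iteratedFDerivWithin_of_isOpen i hs hx, norm_iteratedFDeriv_eq_norm_iteratedDeriv]
    exact hD i hi hin

theorem abs_iteratedDeriv_pow_le {M i p : ℕ} (hip : i ≤ p) {z : ℝ} (hz₀ : 0 ≤ z) (hz₁ : z ≤ 1) :
    |iteratedDeriv i (· ^ M) z| ≤ M ! * z ^ (M - p) := by
  rw [iteratedDeriv_pow, abs_mul, abs_pow, abs_of_nonneg hz₀, Nat.abs_cast]
  exact mul_le_mul (by exact_mod_cast M.descFactorial_le_factorial i)
    (pow_le_pow_of_le_one hz₀ hz₁ (Nat.sub_le_sub_left hip M)) (by positivity) (by positivity)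

theorem abs_iteratedDeriv_one_sub_exp_neg_mul {τ : ℝ} (hτ : 0 ≤ τ) {i : ℕ} (hi : 1 ≤ i) (u : ℝ) :
    |iteratedDeriv i (fun u ↦ 1 - exp (-τ * u)) u| = τ ^ i * exp (-τ * u) := by
  rw [iteratedDeriv_const_sub hi, iteratedDeriv_neg, iteratedDeriv_exp_const_mul, abs_neg,
    abs_mul, abs_pow, abs_neg, abs_of_nonneg hτ, abs_of_pos (exp_pos _)]

theorem abs_iteratedDeriv_rpow_const_le {m x : ℝ} (hm : 0 ≤ m) (hx₀ : 0 < x) (hx₁ : x ≤ 1)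
    (i : ℕ) : |iteratedDeriv i (· ^ m) x| ≤ ((m + i) / x) ^ i := by
  rw [iteratedDeriv_eq_iterate, iter_deriv_rpow_const, descPochhammer_eval_eq_prod_range,
    abs_mul, Finset.abs_prod, abs_of_pos (rpow_pos_of_pos hx₀ _), rpow_sub hx₀, rpow_natCast,
    div_pow]
  have hfactor : ∏ j ∈ Finset.range i, |m - j| ≤ (m + i) ^ i := by
    refine (Finset.prod_le_prod (fun _ _ ↦ abs_nonneg _) fun j hj ↦ ?_).trans_eq
      (by rw [Finset.prod_const, Finset.card_range])
    have : (j : ℝ) ≤ i := by exact_mod_cast (Finset.mem_range.mp hj).le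
    rw [abs_le]; constructor <;> linarith
  calc (∏ j ∈ Finset.range i, |m - j|) * (x ^ m / x ^ i) ≤ (m + i) ^ i * (1 / x ^ i) := by
        gcongr
        exact rpow_le_one hx₀.le hx₁ hm
    _ = (m + i) ^ i / x ^ i := by ring

section OneSubExpPow

variable {τ u : ℝ} (M : ℕ)

theorem abs_iteratedDeriv_one_sub_exp_neg_mul_pow_le_of_le_one (hτ₀ : 0 ≤ τ) (hτ₁ : τ ≤ 1)
    (hu₀ : 0 ≤ u) (hu₁ : u ≤ 1) (p : ℕ) :
    |iteratedDeriv p (fun u ↦ (1 - exp (-τ * u)) ^ M) u| ≤ p ! * M ! * τ ^ M := by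
  set z := 1 - exp (-τ * u)
  have hτu : 0 ≤ τ * u := mul_nonneg hτ₀ hu₀
  have hz₀ : 0 ≤ z := sub_nonneg.mpr (exp_le_one_iff.mpr (by linarith))
  have hz₁ : z ≤ 1 := by linarith [exp_pos (-τ * u)]
  have hzτ : z ≤ τ := by
    linarith [add_one_le_exp (-τ * u), mul_le_of_le_one_right hτ₀ hu₁]
  have hcomp := norm_iteratedDeriv_comp_le_of_isOpen (g := (· ^ M))
    (f := fun u ↦ 1 - exp (-τ * u)) isOpen_univ (mem_univ u) (n := p) (by fun_prop) (by fun_prop)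
    (C := M ! * z ^ (M - p)) (D := τ) (fun i hi ↦ abs_iteratedDeriv_pow_le hi hz₀ hz₁)
    (fun i hi _ ↦ by
      rw [Real.norm_eq_abs, abs_iteratedDeriv_one_sub_exp_neg_mul hτ₀ hi]
      exact mul_le_of_le_one_right (by positivity) (exp_le_one_iff.mpr (by linarith)))
  calc _ ≤ p ! * (M ! * z ^ (M - p)) * τ ^ p := hcomp
    _ ≤ p ! * (M ! * τ ^ (M - p)) * τ ^ p := by gcongr
    _ = p ! * M ! * τ ^ (M - p + p) := by ring
    _ ≤ p ! * M ! * τ ^ M :=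
        mul_le_mul_of_nonneg_left (pow_le_pow_of_le_one hτ₀ hτ₁ (by omega)) (by positivity)

variable {a : ℝ}

theorem abs_iteratedDeriv_one_sub_exp_neg_mul_le (hτ : 0 ≤ τ) (ha : 0 < a) (hau : a ≤ u)
    {i k : ℕ} (hi : 1 ≤ i) (hik : i ≤ k) :
    |iteratedDeriv i (fun u ↦ 1 - exp (-τ * u)) u| ≤ (k / a) ^ i := by
  have hu : 0 < u := ha.trans_le hau
  have hτu : 0 ≤ τ * u := by positivity
  have hexp : (τ * u) ^ i ≤ i ! * exp (τ * u) :=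
    (div_le_iff₀' (by positivity)).mp (pow_div_factorial_le_exp (τ * u) hτu i)
  rw [abs_iteratedDeriv_one_sub_exp_neg_mul hτ hi, div_pow]
  calc τ ^ i * exp (-τ * u) = (τ * u) ^ i * exp (-(τ * u)) / u ^ i := by
        rw [neg_mul, mul_pow]; field_simp
    _ ≤ i ! * exp (τ * u) * exp (-(τ * u)) / u ^ i := by gcongr
    _ = i ! / u ^ i := by rw [mul_assoc, ← exp_add, add_neg_cancel, exp_zero, mul_one]
    _ ≤ k ^ i / a ^ i := by
        gcongr
        exact_mod_cast (factorial_le_pow i).trans (Nat.pow_le_pow_left hik i)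

theorem abs_iteratedDeriv_one_sub_exp_neg_mul_pow_le (hτ : 0 ≤ τ) (ha : 0 < a) (hau : a ≤ u)
    {p k : ℕ} (hpk : p ≤ k) :
    |iteratedDeriv p (fun u ↦ (1 - exp (-τ * u)) ^ M) u| ≤ p ! * M ! * (k / a) ^ p := by
  set z := 1 - exp (-τ * u)
  have hτu : 0 ≤ τ * u := mul_nonneg hτ (ha.le.trans hau)
  have hz₀ : 0 ≤ z := sub_nonneg.mpr (exp_le_one_iff.mpr (by linarith))
  have hz₁ : z ≤ 1 := by linarith [exp_pos (-τ * u)]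
  have hcomp := norm_iteratedDeriv_comp_le_of_isOpen (g := (· ^ M))
    (f := fun u ↦ 1 - exp (-τ * u)) isOpen_univ (mem_univ u) (n := p) (by fun_prop) (by fun_prop)
    (C := M ! * z ^ (M - p)) (D := k / a) (fun i hi ↦ abs_iteratedDeriv_pow_le hi hz₀ hz₁)
    (fun i hi hip ↦ abs_iteratedDeriv_one_sub_exp_neg_mul_le hτ ha hau hi (hip.trans hpk))
  calc _ ≤ p ! * (M ! * z ^ (M - p)) * (k / a) ^ p := hcomp
    _ ≤ p ! * (M ! * 1) * (k / a) ^ p := by gcongr; exact pow_le_one₀ hz₀ hz₁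
    _ = p ! * M ! * (k / a) ^ p := by rw [mul_one]

theorem abs_iteratedDeriv_one_sub_exp_neg_mul_pow_le_min (hτ : 0 ≤ τ) (ha : 0 < a) (hau : a ≤ u)
    (hu : u ≤ 1) {p k : ℕ} (hpk : p ≤ k) :
    |iteratedDeriv p (fun u ↦ (1 - exp (-τ * u)) ^ M) u|
      ≤ k ! * M ! * (1 + k / a) ^ k * min 1 (τ ^ M) := by
  have hD : 1 ≤ 1 + k / a := by simp only [le_add_iff_nonneg_right]; positivity
  have hfact : (p ! : ℝ) ≤ k ! := by exact_mod_cast factorial_le hpk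
  rcases le_total τ 1 with hτ₁ | hτ₁
  · rw [min_eq_right (pow_le_one₀ hτ hτ₁)]
    calc _ ≤ p ! * M ! * τ ^ M :=
          abs_iteratedDeriv_one_sub_exp_neg_mul_pow_le_of_le_one M hτ hτ₁ (ha.le.trans hau) hu p
      _ ≤ k ! * M ! * 1 * τ ^ M := by rw [mul_one]; gcongr
      _ ≤ k ! * M ! * (1 + k / a) ^ k * τ ^ M := by gcongr; exact one_le_pow₀ hD
  · rw [min_eq_left (one_le_pow₀ hτ₁), mul_one]
    calc _ ≤ p ! * M ! * (k / a) ^ p := abs_iteratedDeriv_one_sub_exp_neg_mul_pow_le M hτ ha hau hpk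
      _ ≤ k ! * M ! * (1 + k / a) ^ p := by gcongr; linarith
      _ ≤ k ! * M ! * (1 + k / a) ^ k := by gcongr

end OneSubExpPow

theorem abs_iteratedDeriv_one_sub_exp_neg_mul_rpow_pow_le {τ m b x : ℝ} (hτ : 0 ≤ τ) (hm : 0 ≤ m)
    (hb : 0 < b) (hbx : b ≤ x) (hx : x ≤ 1) (M k : ℕ) :
    |iteratedDeriv k (fun x ↦ (1 - exp (-τ * x ^ m)) ^ M) x|
      ≤ k ! * (k ! * M ! * (1 + k / b ^ m) ^ k) * ((m + k) / b) ^ k * min 1 (τ ^ M) := by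
  have hx₀ : 0 < x := hb.trans_le hbx
  have hcomp := norm_iteratedDeriv_comp_le_of_isOpen (g := fun u ↦ (1 - exp (-τ * u)) ^ M)
    (f := (· ^ m)) isOpen_Ioi hx₀ (n := k) (D := (m + k) / b) (by fun_prop)
    (fun y hy ↦ (contDiffAt_rpow_const_of_ne (ne_of_gt hy)).contDiffWithinAt)
    (fun i hik ↦ abs_iteratedDeriv_one_sub_exp_neg_mul_pow_le_min M hτ (rpow_pos_of_pos hb m)
      (rpow_le_rpow hb.le hbx hm) (rpow_le_one hx₀.le hx hm) hik)
    (fun i _ hik ↦ (abs_iteratedDeriv_rpow_const_le hm hx₀ hx i).trans (by gcongr))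
  exact hcomp.trans_eq (by ring)

theorem stmt_15_general (γ : ℕ) (m : ℝ) (hm : 1 ≤ m) (M : ℕ) :
    ∃ C : ℝ, 0 < C ∧ ∀ t : ℝ, 0 < t →
      ∑ k ∈ Finset.range (γ + 1),
          ⨆ lam : Set.Icc (1 / 4 : ℝ) 1,
            |iteratedDeriv k (fun x : ℝ => (1 - Real.exp (-(t * x) ^ m)) ^ M) (lam : ℝ)|
        ≤ C * min 1 (t ^ (m * M)) := by
  set K : ℕ → ℝ := fun k ↦
    k ! * (k ! * M ! * (1 + k / (1 / 4) ^ m) ^ k) * ((m + k) / (1 / 4)) ^ k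
  have hK : ∀ k, 0 < K k := fun k ↦ by positivity
  refine ⟨∑ k ∈ Finset.range (γ + 1), K k, Finset.sum_pos (fun k _ ↦ hK k) ⟨0, by simp⟩,
    fun t ht ↦ ?_⟩
  rw [rpow_mul ht.le, rpow_natCast, Finset.sum_mul]
  refine Finset.sum_le_sum fun k _ ↦ Real.iSup_le (fun x ↦ ?_) (by positivity)
  obtain ⟨hx₁, hx₂⟩ := x.2
  have hrescale : EqOn (fun x : ℝ ↦ (1 - exp (-(t * x) ^ m)) ^ M)
      (fun x ↦ (1 - exp (-t ^ m * x ^ m)) ^ M) (Ioi 0) := fun y hy ↦ by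
    simp only [mul_rpow ht.le (le_of_lt hy), neg_mul]
  rw [hrescale.iteratedDeriv_of_isOpen isOpen_Ioi k (show (0 : ℝ) < x by linarith)]
  exact abs_iteratedDeriv_one_sub_exp_neg_mul_rpow_pow_le (by positivity) (by linarith)
    (by norm_num) hx₁ hx₂ M k

theorem stmt_15 (γ : ℕ) (hγ : 0 < γ) (s : ℝ) (hs : 0 ≤ s)
    (m : ℝ) (hm : 1 ≤ m) (M : ℕ) (hM : 0 < M) :
    ∃ C : ℝ, 0 < C ∧ ∀ t : ℝ, 0 < t →
      ∑ k ∈ Finset.range (γ + 1),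
          ⨆ lam : Set.Icc (1 / 4 : ℝ) 1,
            |iteratedDeriv k (fun x : ℝ => (1 - Real.exp (-(t * x) ^ m)) ^ M) (lam : ℝ)|
        ≤ C * min 1 (t ^ (m * M)) :=
  stmt_15_general γ m hm M
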